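/- The relation Q is definable in G without parameters: there is a first-order formula φ(x,y,z) in the language with the single binary relation symbol E such that for all a,b,c ∈ V, G ⊨ φ(a,b,c) if and only if a,b,c are pairwise distinct and a ∩ b ∩ c ≠ ∅. -/
import Mathlib


open FirstOrder FirstOrder.Language

/-- The vertex set: all 2-element subsets of `M₀`. -/
def V (M₀ : Type) : Type := {s : Set M₀ // s.ncard = 2}

/-- The adjacency relation: two 2-subsets are adjacent iff they are distinct and intersect
in exactly one point. -/
def ER {M₀ : Type} (u v : V M₀) : Prop :=
  u ≠ v ∧ (u.1 ∩ v.1).ncard = 1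

/-- The ternary relation: three pairwise distinct 2-subsets with a common point. -/
def QR {M₀ : Type} (a b c : V M₀) : Prop :=
  a ≠ b ∧ a ≠ c ∧ b ≠ c ∧ (a.1 ∩ b.1 ∩ c.1).Nonempty

/-- The symbols of the language with one binary relation symbol `E`. -/
inductive GRel : ℕ → Type
  | e : GRel 2

/-- The language with one binary relation symbol `E`. -/
def Lg : FirstOrder.Language := ⟨fun _ => Empty, GRel⟩

/-- The structure `G` on `V M₀`: `E(u,v)` iff `u ≠ v` and `|u ∩ v| = 1`. -/
instance (M₀ : Type) : Lg.Structure (V M₀) where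
  funMap := fun f _ => f.elim
  RelMap := fun r x => match r with
    | .e => ER (x 0) (x 1)


def eR : Lg.Relations 2 := GRel.e

def φQ : Lg.Formula (Fin 3) :=
  eR.boundedFormula₂ (.var (.inl 0)) (.var (.inl 1)) ⊓
    eR.boundedFormula₂ (.var (.inl 0)) (.var (.inl 2)) ⊓
    eR.boundedFormula₂ (.var (.inl 1)) (.var (.inl 2)) ⊓
    BoundedFormula.ex
      (eR.boundedFormula₂ (.var (.inl 0)) (.var (.inr 0)) ⊓
       eR.boundedFormula₂ (.var (.inl 1)) (.var (.inr 0)) ⊓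
       eR.boundedFormula₂ (.var (.inl 2)) (.var (.inr 0)))

lemma relmap_iff {M₀ : Type} (u v : V M₀) :
    Structure.RelMap (L := Lg) (M := V M₀) eR ![u, v] ↔ ER u v := Iff.rfl

lemma realize_φQ {M₀ : Type} (a b c : V M₀) :
    φQ.Realize ![a, b, c] ↔ (ER a b ∧ ER a c ∧ ER b c ∧ ∃ w, ER a w ∧ ER b w ∧ ER c w) := by
  simp only [φQ, BoundedFormula.realize_inf, BoundedFormula.realize_ex,
    BoundedFormula.realize_rel₂, Formula.Realize, Term.realize_var,
    Sum.elim_inl, Sum.elim_inr, Fin.snoc, relmap_iff, Matrix.cons_val_zero, Matrix.cons_val_one,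
    Matrix.head_cons, Matrix.cons_val_two, Matrix.tail_cons]
  simp [relmap_iff, and_assoc]


lemma Vfin {M₀ : Type} (u : V M₀) : u.1.Finite :=
  Set.finite_of_ncard_ne_zero (by rw [u.2]; norm_num)

lemma inter_eq_of_mem {M₀ : Type} {u v : V M₀} (huv : u ≠ v) {p : M₀}
    (hp : p ∈ u.1 ∩ v.1) : u.1 ∩ v.1 = {p} := by
  apply Set.eq_singleton_iff_unique_mem.2 ⟨hp, fun q hq => ?_⟩
  by_contra hqp
  have h1 : ({p, q} : Set M₀) = u.1 := by
    apply Set.eq_of_subset_of_ncard_le _ _ (Vfin u)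
    · intro x hx; rcases hx with rfl | rfl
      exacts [hp.1, hq.1]
    · rw [u.2, Set.ncard_pair (Ne.symm hqp)]
  have h2 : ({p, q} : Set M₀) = v.1 := by
    apply Set.eq_of_subset_of_ncard_le _ _ (Vfin v)
    · intro x hx; rcases hx with rfl | rfl
      exacts [hp.2, hq.2]
    · rw [v.2, Set.ncard_pair (Ne.symm hqp)]
  exact huv (Subtype.ext (h1 ▸ h2))

lemma adj_of_mem {M₀ : Type} {u v : V M₀} (huv : u ≠ v) {p : M₀}
    (hp : p ∈ u.1 ∩ v.1) : ER u v :=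
  ⟨huv, by rw [inter_eq_of_mem huv hp]; exact Set.ncard_singleton p⟩

lemma sem_iff {M₀ : Type} [Infinite M₀] (a b c : V M₀) :
    (ER a b ∧ ER a c ∧ ER b c ∧ ∃ w, ER a w ∧ ER b w ∧ ER c w) ↔ QR a b c := by
  constructor
  · rintro ⟨⟨hab, _⟩, ⟨hac, _⟩, ⟨hbc, _⟩, w, ⟨haw, haw1⟩, ⟨hbw, hbw1⟩, ⟨hcw, hcw1⟩⟩
    refine ⟨hab, hac, hbc, ?_⟩
    by_contra hemp
    obtain ⟨p, hp⟩ := Set.nonempty_of_ncard_ne_zero (s := a.1 ∩ b.1) (by omega)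
    obtain ⟨q, hq⟩ := Set.nonempty_of_ncard_ne_zero (s := a.1 ∩ c.1) (by omega)
    obtain ⟨r, hr⟩ := Set.nonempty_of_ncard_ne_zero (s := b.1 ∩ c.1) (by omega)
    have hpq : p ≠ q := fun h => hemp ⟨p, ⟨hp.1, hp.2⟩, h ▸ hq.2⟩
    have hpr : p ≠ r := fun h => hemp ⟨p, ⟨hp.1, hp.2⟩, by rw [h]; exact hr.2⟩
    have hqr : q ≠ r := fun h => hemp ⟨q, ⟨hq.1, h ▸ hr.1⟩, hq.2⟩
    have ha : a.1 = {p, q} :=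
      (Set.eq_of_subset_of_ncard_le (by rintro x (rfl | rfl); exacts [hp.1, hq.1])
        (by rw [a.2, Set.ncard_pair hpq]) (Vfin a)).symm
    have hb : b.1 = {p, r} :=
      (Set.eq_of_subset_of_ncard_le (by rintro x (rfl | rfl); exacts [hp.2, hr.1])
        (by rw [b.2, Set.ncard_pair hpr]) (Vfin b)).symm
    have hc : c.1 = {q, r} :=
      (Set.eq_of_subset_of_ncard_le (by rintro x (rfl | rfl); exacts [hq.2, hr.2])
        (by rw [c.2, Set.ncard_pair hqr]) (Vfin c)).symm
    by_cases hpw : p ∈ w.1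
    · have haws : a.1 ∩ w.1 = {p} := inter_eq_of_mem haw ⟨ha ▸ Set.mem_insert p {q}, hpw⟩
      have hbws : b.1 ∩ w.1 = {p} := inter_eq_of_mem hbw ⟨hb ▸ Set.mem_insert p {r}, hpw⟩
      have hqw : q ∉ w.1 := fun h => hpq (by
        have : q ∈ ({p} : Set M₀) := haws ▸ ⟨ha ▸ by simp, h⟩
        simpa using this.symm)
      have hrw : r ∉ w.1 := fun h => hpr (by
        have : r ∈ ({p} : Set M₀) := hbws ▸ ⟨hb ▸ by simp, h⟩
        simpa using this.symm)
      obtain ⟨x, hx⟩ := Set.nonempty_of_ncard_ne_zero (s := c.1 ∩ w.1) (by omega)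
      rw [hc] at hx
      rcases hx.1 with rfl | rfl
      exacts [hqw hx.2, hrw hx.2]
    · have hqw : q ∈ w.1 := by
        obtain ⟨x, hx⟩ := Set.nonempty_of_ncard_ne_zero (s := a.1 ∩ w.1) (by omega)
        rw [ha] at hx
        rcases hx.1 with rfl | rfl
        exacts [absurd hx.2 hpw, hx.2]
      have hrw : r ∈ w.1 := by
        obtain ⟨x, hx⟩ := Set.nonempty_of_ncard_ne_zero (s := b.1 ∩ w.1) (by omega)
        rw [hb] at hx
        rcases hx.1 with rfl | rfl
        exacts [absurd hx.2 hpw, hx.2]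
      have : w.1 = {q, r} :=
        (Set.eq_of_subset_of_ncard_le (by rintro x (rfl | rfl); exacts [hqw, hrw])
          (by rw [w.2, Set.ncard_pair hqr]) (Vfin w)).symm
      exact hcw (Subtype.ext (hc.trans this.symm))
  · rintro ⟨hab, hac, hbc, p, ⟨⟨hpa, hpb⟩, hpc⟩⟩
    refine ⟨adj_of_mem hab ⟨hpa, hpb⟩, adj_of_mem hac ⟨hpa, hpc⟩, adj_of_mem hbc ⟨hpb, hpc⟩, ?_⟩
    have hfin : (a.1 ∪ b.1 ∪ c.1).Finite := ((Vfin a).union (Vfin b)).union (Vfin c)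
    obtain ⟨r, hr⟩ := hfin.infinite_compl.nonempty
    have hrp : p ≠ r := fun h => hr (Or.inl (Or.inl (h ▸ hpa)))
    refine ⟨⟨{p, r}, Set.ncard_pair hrp⟩, ?_, ?_, ?_⟩ <;>
    · refine adj_of_mem (fun h => hr ?_) ⟨by assumption, Set.mem_insert p {r}⟩
      first
      | exact Or.inl (Or.inl (h ▸ Set.mem_insert_iff.2 (Or.inr rfl)))
      | exact Or.inl (Or.inr (h ▸ Set.mem_insert_iff.2 (Or.inr rfl)))
      | exact Or.inr (h ▸ Set.mem_insert_iff.2 (Or.inr rfl))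

/-- The relation `Q` is definable in `G` without parameters: there is a parameter-free
first-order formula `φ(x,y,z)` in the language of `G` which holds of `(a,b,c)` iff
`a,b,c` are pairwise distinct and `a ∩ b ∩ c ≠ ∅`. -/
theorem Q_definable_in_G (M₀ : Type) [Countable M₀] [Infinite M₀] :
    ∃ φ : Lg.Formula (Fin 3), ∀ a b c : V M₀,
      (φ.Realize ![a, b, c] ↔ QR a b c) := by
  exact ⟨φQ, fun a b c => (realize_φQ a b c).trans (sem_iff a b c)⟩
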